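/- arXiv:2410.21441 — 2 statements merged into one kernel-verified Lean document; each statement's English description precedes it below -/
import Mathlib

section
/- Let h : ℝ^m → ℝ^{m×d} be a matrix-valued map whose vectorization v : ℝ^m → ℝ^{md} is Lipschitz with constant L_v ≤ 1. Define the transition T(q, a) = q + h(q)·a. If ‖a‖₂ < 1 and q_j = T(q_i, a), then ‖T(q_j, -a) - q_i‖₂ ≤ L_v · ‖a‖₂ · ‖q_j - q_i‖₂ < ‖q_j - q_i‖₂ whenever q_j ≠ q_i. -/
noncomputable def mulE {m d : ℕ} (H : Matrix (Fin m) (Fin d) ℝ)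
    (a : EuclideanSpace ℝ (Fin d)) : EuclideanSpace ℝ (Fin m) :=
  Matrix.toEuclideanLin H a

noncomputable def frob {m d : ℕ} (A : Matrix (Fin m) (Fin d) ℝ) : ℝ :=
  Real.sqrt (∑ i, ∑ j, (A i j) ^ 2)

noncomputable def opNorm {m d : ℕ} (A : Matrix (Fin m) (Fin d) ℝ) : ℝ :=
  ‖LinearMap.toContinuousLinearMap (Matrix.toEuclideanLin A)‖

noncomputable def toE {n : ℕ} (x : Fin n → ℝ) : EuclideanSpace ℝ (Fin n) :=
  (WithLp.equiv 2 _).symm x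

lemma frob_nonneg {m d : ℕ} (A : Matrix (Fin m) (Fin d) ℝ) : 0 ≤ frob A :=
  Real.sqrt_nonneg _

lemma mulE_norm_le {m d : ℕ} (A : Matrix (Fin m) (Fin d) ℝ)
    (a : EuclideanSpace ℝ (Fin d)) : ‖mulE A a‖ ≤ frob A * ‖a‖ := by
  have hA : mulE A a = fun i => ∑ j, A i j * a j := by
    funext i
    simp [mulE, Matrix.toEuclideanLin_apply, Matrix.mulVec, dotProduct]
  rw [EuclideanSpace.norm_eq]
  have key : ∑ i, ‖mulE A a i‖ ^ 2 ≤ (∑ i, ∑ j, (A i j) ^ 2) * ∑ j, ‖a j‖ ^ 2 := by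
    rw [Finset.sum_mul]
    apply Finset.sum_le_sum
    intro i _
    rw [hA]
    simp only [Real.norm_eq_abs, sq_abs]
    exact Finset.sum_mul_sq_le_sq_mul_sq _ _ _
  calc Real.sqrt (∑ i, ‖mulE A a i‖ ^ 2)
      ≤ Real.sqrt ((∑ i, ∑ j, (A i j) ^ 2) * ∑ j, ‖a j‖ ^ 2) := Real.sqrt_le_sqrt key
    _ = frob A * ‖a‖ := by
        rw [Real.sqrt_mul (by positivity), frob, EuclideanSpace.norm_eq]

/-- Soft reversibility: with `v` the vectorization of `h` Lipschitz with constant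
`L ≤ 1`, `‖a‖ < 1`, and `q_j = T(q_i, a)`, the reverse action brings the robot
closer: `‖T(q_j, -a) - q_i‖ ≤ L‖a‖‖q_j - q_i‖ < ‖q_j - q_i‖` (when `q_j ≠ q_i`). -/
theorem stmt_0 {m d : ℕ} (h : EuclideanSpace ℝ (Fin m) → Matrix (Fin m) (Fin d) ℝ)
    (v : EuclideanSpace ℝ (Fin m) → EuclideanSpace ℝ (Fin (m * d)))
    (hvec : ∀ q q', ‖v q - v q'‖ = frob (h q - h q'))
    (L : ℝ) (hL : 0 ≤ L) (hL1 : L ≤ 1)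
    (hlip : ∀ q q', ‖v q - v q'‖ ≤ L * ‖q - q'‖)
    (T : EuclideanSpace ℝ (Fin m) → EuclideanSpace ℝ (Fin d) → EuclideanSpace ℝ (Fin m))
    (hT : ∀ q a, T q a = q + mulE (h q) a)
    (a : EuclideanSpace ℝ (Fin d)) (ha : ‖a‖ < 1)
    (qi qj : EuclideanSpace ℝ (Fin m)) (hqj : qj = T qi a) :
    ‖T qj (-a) - qi‖ ≤ L * ‖a‖ * ‖qj - qi‖ ∧
      (qj ≠ qi → L * ‖a‖ * ‖qj - qi‖ < ‖qj - qi‖) := by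
  have hdiff : T qj (-a) - qi = mulE (h qi - h qj) a := by
    rw [hT, hqj, hT]
    simp only [mulE, map_sub, map_neg, LinearMap.sub_apply]
    abel
  constructor
  · rw [hdiff]
    calc ‖mulE (h qi - h qj) a‖ ≤ frob (h qi - h qj) * ‖a‖ := mulE_norm_le _ _
      _ = ‖v qi - v qj‖ * ‖a‖ := by rw [hvec]
      _ ≤ (L * ‖qi - qj‖) * ‖a‖ :=
          mul_le_mul_of_nonneg_right (hlip _ _) (norm_nonneg _)
      _ = L * ‖a‖ * ‖qj - qi‖ := by rw [norm_sub_rev]; ring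
  · intro hne
    have h1 : 0 < ‖qj - qi‖ := by
      rw [norm_pos_iff]; exact sub_ne_zero_of_ne hne
    have h2 : L * ‖a‖ < 1 := by
      calc L * ‖a‖ ≤ 1 * ‖a‖ := mul_le_mul_of_nonneg_right hL1 (norm_nonneg _)
        _ = ‖a‖ := one_mul _
        _ < 1 := ha
    nlinarith
end

section
/- Let v : ℝ^m → ℝ^{md} be L_v-Lipschitz and let ‖a‖₂ < 1/L_v (with L_v > 0). For q_j = q_i + h(q_i)a and q_k = q_j - h(q_j)a, we have the exact bound ‖q_k - q_i‖₂ ≤ L_v ‖a‖₂ ‖h(q_i) a‖₂ ≤ L_v ‖a‖₂² ‖h(q_i)‖₂. -/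
lemma mulE_apply {m d : ℕ} (A : Matrix (Fin m) (Fin d) ℝ) (x : EuclideanSpace ℝ (Fin d))
    (i : Fin m) : mulE A x i = ∑ j, A i j * x j := by
  simp [mulE, Matrix.toEuclideanLin_apply, Matrix.mulVec, dotProduct]

lemma mulE_le_frob {m d : ℕ} (A : Matrix (Fin m) (Fin d) ℝ) (x : EuclideanSpace ℝ (Fin d)) :
    ‖mulE A x‖ ≤ frob A * ‖x‖ := by
  have h1 : ‖mulE A x‖ = Real.sqrt (∑ i, (mulE A x i) ^ 2) := by
    rw [EuclideanSpace.norm_eq]; simp [Real.norm_eq_abs, sq_abs]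
  have h2 : ‖x‖ = Real.sqrt (∑ j, (x j) ^ 2) := by
    rw [EuclideanSpace.norm_eq]; simp [Real.norm_eq_abs, sq_abs]
  rw [h1, h2, frob, ← Real.sqrt_mul (by positivity)]
  apply Real.sqrt_le_sqrt
  rw [Finset.sum_mul]
  apply Finset.sum_le_sum
  intro i _
  rw [mulE_apply]
  exact Finset.sum_mul_sq_le_sq_mul_sq _ _ _

lemma mulE_sub {m d : ℕ} (A B : Matrix (Fin m) (Fin d) ℝ) (x : EuclideanSpace ℝ (Fin d)) :
    mulE (A - B) x = mulE A x - mulE B x := by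
  simp [mulE, map_sub]

lemma mulE_le_opNorm {m d : ℕ} (A : Matrix (Fin m) (Fin d) ℝ) (x : EuclideanSpace ℝ (Fin d)) :
    ‖mulE A x‖ ≤ opNorm A * ‖x‖ := by
  simpa [mulE, opNorm] using
    (LinearMap.toContinuousLinearMap (Matrix.toEuclideanLin A)).le_opNorm x

/-- The reversal error is quadratic in the action norm:
`‖q_k - q_i‖ ≤ L‖a‖‖h(q_i)a‖ ≤ L‖a‖²‖h(q_i)‖₂`. -/
theorem stmt_14 {m d : ℕ} (h : EuclideanSpace ℝ (Fin m) → Matrix (Fin m) (Fin d) ℝ)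
    (v : EuclideanSpace ℝ (Fin m) → EuclideanSpace ℝ (Fin (m * d)))
    (hvec : ∀ q q', ‖v q - v q'‖ = frob (h q - h q'))
    (L : ℝ) (hL : 0 < L)
    (hlip : ∀ q q', ‖v q - v q'‖ ≤ L * ‖q - q'‖)
    (a : EuclideanSpace ℝ (Fin d)) (ha : ‖a‖ < 1 / L)
    (qi qj qk : EuclideanSpace ℝ (Fin m))
    (hqj : qj = qi + mulE (h qi) a)
    (hqk : qk = qj - mulE (h qj) a) :
    ‖qk - qi‖ ≤ L * ‖a‖ * ‖mulE (h qi) a‖ ∧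
      L * ‖a‖ * ‖mulE (h qi) a‖ ≤ L * ‖a‖ ^ 2 * opNorm (h qi) := by
  constructor
  · have hdiff : qk - qi = mulE (h qi - h qj) a := by
      rw [mulE_sub, hqk, hqj]; abel
    rw [hdiff]
    calc ‖mulE (h qi - h qj) a‖ ≤ frob (h qi - h qj) * ‖a‖ := mulE_le_frob _ _
      _ = ‖v qi - v qj‖ * ‖a‖ := by rw [hvec]
      _ ≤ (L * ‖qi - qj‖) * ‖a‖ := by
          exact mul_le_mul_of_nonneg_right (hlip qi qj) (norm_nonneg a)
      _ = L * ‖a‖ * ‖mulE (h qi) a‖ := by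
          have : qi - qj = -(mulE (h qi) a) := by rw [hqj]; abel
          rw [this, norm_neg]; ring
  · have h1 : ‖mulE (h qi) a‖ ≤ opNorm (h qi) * ‖a‖ := mulE_le_opNorm _ _
    calc L * ‖a‖ * ‖mulE (h qi) a‖ ≤ L * ‖a‖ * (opNorm (h qi) * ‖a‖) :=
          mul_le_mul_of_nonneg_left h1 (by positivity)
      _ = L * ‖a‖ ^ 2 * opNorm (h qi) := by ring
end
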